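/- Suppose C is the disjoint union of two full subcategories C₀ and C' with no morphisms between them, and there is a full functor C₁ ⥤ C₀ surjective on objects where C₁ is a full subcategory of C'. If C' is quasi-Gröbner, then C is quasi-Gröbner. -/

import Mathlib

open CategoryTheory

universe w₁ w₂

def PropertyF {C : Type*} [Category C] {D : Type*} [Category D] (Φ : C ⥤ D) : Prop :=
  ∀ d : D, ∃ (n : ℕ) (c : Fin n → C) (f : ∀ i, d ⟶ Φ.obj (c i)),
    ∀ (c' : C) (g : d ⟶ Φ.obj c'), ∃ (i : Fin n) (h : c i ⟶ c'), g = f i ≫ Φ.map h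

/-- (G1): an admissible order on the morphisms out of `c`, i.e. a family of well-orders on
the hom-sets `c ⟶ c'` compatible with postcomposition. -/
def HasAdmissibleOrder {C : Type*} [Category C] (c : C) : Prop :=
  ∃ r : ∀ c' : C, (c ⟶ c') → (c ⟶ c') → Prop,
    (∀ c' : C, IsWellOrder (c ⟶ c') (r c')) ∧
    ∀ (c' c'' : C) (f f' : c ⟶ c') (g : c' ⟶ c''), r c' f f' → r c'' (f ≫ g) (f' ≫ g)

/-- (G2): for every object `c` the poset `|c/C|` is Noetherian. -/
def PropertyG2 (C : Type*) [Category C] : Prop :=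
  ∀ (c : C) (x : ℕ → Σ c' : C, (c ⟶ c')),
    ∃ i j : ℕ, i < j ∧ ∃ h : (x i).1 ⟶ (x j).1, (x i).2 ≫ h = (x j).2

/-- A category is Gröbner if it satisfies (G1) and (G2). -/
def Grobner (C : Type*) [Category C] : Prop :=
  (∀ c : C, HasAdmissibleOrder c) ∧ PropertyG2 C

/-- A category is quasi-Gröbner if it admits an essentially surjective functor satisfying
property (F) from a Gröbner category. -/
def QuasiGrobner (D : Type*) [Category D] : Prop :=
  ∃ (A : Cat.{w₁, w₂}) (Φ : A ⥤ D), Φ.EssSurj ∧ PropertyF Φ ∧ Grobner A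

/-!
Let `Φ : A ⥤ C'` witness that `C'` is quasi-Gröbner. Over a source satisfying (G2), property (F)
is equivalent to its sequential form (every sequence of maps `d ⟶ Φ cₙ` has a term through which
a later one factors), and the sequential form passes to full subcategories. Hence `Φ`, restricted
to the objects `B ⊆ A` sent into the isomorphism closure of `C₁` and followed by `C₁ ⥤ C₀`, is an
essentially surjective (F)-functor from a Gröbner category onto `C₀`. As `C₀` and `C'` have no
morphisms between them, it assembles with `Φ` into one functor out of the Gröbner category `A ⊕ B`.
-/

lemma exists_strictMono_comp_eq_const {β : Type*} [Finite β] (f : ℕ → β) :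
    ∃ (b : β) (φ : ℕ → ℕ), StrictMono φ ∧ ∀ n, f (φ n) = b := by
  obtain ⟨b, hb⟩ := Finite.exists_infinite_fiber f
  obtain ⟨φ, hφ, hφb⟩ := Filter.extraction_of_frequently_atTop
    (Nat.frequently_atTop_iff_infinite.2 (Set.infinite_coe_iff.1 hb))
  exact ⟨b, φ, hφ, hφb⟩

lemma exists_finite_weakly_initial {α : Type*} (r : α → α → Prop)
    (h : ∀ x : ℕ → α, ∃ i j : ℕ, i < j ∧ r (x i) (x j)) :
    ∃ (n : ℕ) (y : Fin n → α), ∀ a : α, ∃ i, r (y i) a := by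
  by_contra! hc
  obtain ⟨f, -, hf⟩ := exists_seq_of_forall_finset_exists (fun _ : α => True)
    (fun x y => ¬ r x y) (fun s _ => by
      obtain ⟨a, ha⟩ := hc s.card (fun i => (s.equivFin.symm i : α))
      refine ⟨a, trivial, fun x hx => ?_⟩
      simpa using ha (s.equivFin ⟨x, hx⟩))
  obtain ⟨i, j, hij, hr⟩ := h f
  exact hf i j hij hr

namespace PropertyF

variable {A : Type*} [Category A] {B : Type*} [Category B] {D : Type*} [Category D]

lemma of_finite {Φ : A ⥤ D}
    (h : ∀ d : D, ∃ (ι : Type) (_ : Finite ι) (c : ι → A) (f : ∀ i, d ⟶ Φ.obj (c i)),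
      ∀ (c' : A) (g : d ⟶ Φ.obj c'), ∃ (i : ι) (h : c i ⟶ c'), g = f i ≫ Φ.map h) :
    PropertyF Φ := by
  intro d
  obtain ⟨ι, _, c, f, hf⟩ := h d
  obtain ⟨n, ⟨e⟩⟩ := Finite.exists_equiv_fin ι
  refine ⟨n, c ∘ e.symm, fun i => f (e.symm i), fun c' g => ?_⟩
  obtain ⟨i, h, rfl⟩ := hf c' g
  obtain ⟨j, rfl⟩ := e.symm.surjective i
  exact ⟨j, h, rfl⟩

lemma of_full_of_essSurj (Φ : A ⥤ D) [Φ.Full] [Φ.EssSurj] : PropertyF Φ := fun d =>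
  ⟨1, fun _ => Φ.objPreimage d, fun _ => (Φ.objObjPreimageIso d).inv, fun _ g =>
    ⟨0, Φ.preimage ((Φ.objObjPreimageIso d).hom ≫ g), by simp⟩⟩

lemma comp {Φ : A ⥤ B} {Ψ : B ⥤ D} (hΦ : PropertyF Φ) (hΨ : PropertyF Ψ) :
    PropertyF (Φ ⋙ Ψ) := by
  refine of_finite fun d => ?_
  obtain ⟨n, b, f, hf⟩ := hΨ d
  choose m a f' hf' using fun i => hΦ (b i)
  refine ⟨Σ i, Fin (m i), inferInstance, fun k => a k.1 k.2,
    fun k => f k.1 ≫ Ψ.map (f' k.1 k.2), fun c' g => ?_⟩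
  obtain ⟨i, h, rfl⟩ := hf (Φ.obj c') g
  obtain ⟨j, h', rfl⟩ := hf' i c' h
  exact ⟨⟨i, j⟩, h', by simp⟩

lemma comp_ι {Z : ObjectProperty D} (hZ : ∀ ⦃d d' : D⦄, (d ⟶ d') → Z d' → Z d)
    {Φ : A ⥤ Z.FullSubcategory} (hΦ : PropertyF Φ) : PropertyF (Φ ⋙ Z.ι) := by
  intro d
  by_cases hd : Z d
  · obtain ⟨n, c, f, hf⟩ := hΦ ⟨d, hd⟩
    refine ⟨n, c, fun i => (f i).hom, fun c' g => ?_⟩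
    obtain ⟨i, h, hg⟩ := hf c' (ObjectProperty.homMk g)
    exact ⟨i, h, congrArg InducedCategory.Hom.hom hg⟩
  · exact ⟨0, Fin.elim0, fun i => i.elim0, fun c' g => (hd (hZ g (Φ.obj c').property)).elim⟩

lemma sum' {L : A ⥤ D} {R : B ⥤ D}
    (hL : PropertyF L) (hR : PropertyF R) : PropertyF (L.sum' R) := by
  refine of_finite fun d => ?_
  obtain ⟨n, a, f, hf⟩ := hL d
  obtain ⟨m, b, f', hf'⟩ := hR d
  refine ⟨Fin n ⊕ Fin m, inferInstance, Sum.elim (Sum.inl ∘ a) (Sum.inr ∘ b),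
    Sum.rec f f', ?_⟩
  rintro (c' | c') g
  · obtain ⟨i, h, rfl⟩ := hf c' g
    exact ⟨Sum.inl i, (Sum.inl_ A B).map h, rfl⟩
  · obtain ⟨i, h, rfl⟩ := hf' c' g
    exact ⟨Sum.inr i, (Sum.inr_ A B).map h, rfl⟩

lemma of_forall_seq {Φ : A ⥤ D}
    (h : ∀ (d : D) (x : ℕ → Σ c : A, (d ⟶ Φ.obj c)),
      ∃ i j : ℕ, i < j ∧ ∃ h : (x i).1 ⟶ (x j).1, (x i).2 ≫ Φ.map h = (x j).2) :
    PropertyF Φ := by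
  intro d
  obtain ⟨n, y, hy⟩ := exists_finite_weakly_initial
    (fun p q : Σ c : A, (d ⟶ Φ.obj c) => ∃ h : p.1 ⟶ q.1, p.2 ≫ Φ.map h = q.2) (h d)
  refine ⟨n, fun i => (y i).1, fun i => (y i).2, fun c' g => ?_⟩
  obtain ⟨i, h, e⟩ := hy ⟨c', g⟩
  exact ⟨i, h, e.symm⟩

lemma exists_lt_comp_map_eq {Φ : A ⥤ D} (hΦ : PropertyF Φ) (hA : PropertyG2 A) (d : D)
    (x : ℕ → Σ c : A, (d ⟶ Φ.obj c)) :
    ∃ i j : ℕ, i < j ∧ ∃ h : (x i).1 ⟶ (x j).1, (x i).2 ≫ Φ.map h = (x j).2 := by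
  obtain ⟨n, c, f, hf⟩ := hΦ d
  choose idx k hk using fun m => hf (x m).1 (x m).2
  obtain ⟨i₀, φ, hφ, hφi₀⟩ := exists_strictMono_comp_eq_const idx
  have hk' : ∀ t, ∃ k' : c i₀ ⟶ (x (φ t)).1, (x (φ t)).2 = f i₀ ≫ Φ.map k' := fun t => by
    rw [← hφi₀ t]
    exact ⟨k (φ t), hk (φ t)⟩
  choose k' hk' using hk'
  obtain ⟨s, t, hst, l, hl⟩ := hA (c i₀) fun t => ⟨(x (φ t)).1, k' t⟩
  dsimp only at hl
  refine ⟨φ s, φ t, hφ hst, l, ?_⟩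
  rw [hk' s, hk' t, Category.assoc, ← Φ.map_comp, hl]

lemma lift_inverseImage {Φ : A ⥤ D} (hΦ : PropertyF Φ) (hA : PropertyG2 A)
    (Z : ObjectProperty D) :
    PropertyF (Z.lift ((Z.inverseImage Φ).ι ⋙ Φ) fun a => a.property) := by
  refine of_forall_seq fun d x => ?_
  obtain ⟨i, j, hij, h, e⟩ :=
    hΦ.exists_lt_comp_map_eq hA d.obj fun n => ⟨(x n).1.obj, (x n).2.hom⟩
  exact ⟨i, j, hij, ObjectProperty.homMk h, by ext; exact e⟩

end PropertyF

section FullSubcategory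

variable {A : Type*} [Category A] (Z : ObjectProperty A)

lemma HasAdmissibleOrder.fullSubcategory {a : Z.FullSubcategory} (h : HasAdmissibleOrder a.obj) :
    HasAdmissibleOrder a := by
  obtain ⟨r, hwo, hcomp⟩ := h
  refine ⟨fun a' f f' => r a'.obj f.hom f'.hom, fun a' => ?_,
    fun a' a'' f f' g hr => hcomp a'.obj a''.obj f.hom f'.hom g.hom hr⟩
  have := hwo a'.obj
  exact Function.Injective.isWellOrder (r a'.obj) (f := fun g : a ⟶ a' => g.hom)
    fun g g' h => by ext; exact h

lemma PropertyG2.fullSubcategory (h : PropertyG2 A) : PropertyG2 Z.FullSubcategory := by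
  intro a x
  obtain ⟨i, j, hij, k, e⟩ := h a.obj fun n => ⟨(x n).1.obj, (x n).2.hom⟩
  exact ⟨i, j, hij, ObjectProperty.homMk k, by ext; exact e⟩

lemma Grobner.fullSubcategory (h : Grobner A) : Grobner Z.FullSubcategory :=
  ⟨fun a => (h.1 a.obj).fullSubcategory Z, h.2.fullSubcategory Z⟩

end FullSubcategory

section Sum

variable {A B : Type*} [Category A] [Category B]

lemma HasAdmissibleOrder.inl {a : A} (h : HasAdmissibleOrder a) :
    HasAdmissibleOrder (Sum.inl a : A ⊕ B) := by
  obtain ⟨r, hwo, hcomp⟩ := h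
  refine ⟨fun | .inl a' => fun f f' => r a' f.down f'.down | .inr _ => fun _ _ => False, ?_, ?_⟩
  · rintro (a' | b')
    · have := hwo a'
      exact ULift.down_injective.isWellOrder (r a')
    · have : IsEmpty (Sum.inl a ⟶ (Sum.inr b' : A ⊕ B)) := ⟨hom_inl_inr_false A B⟩
      infer_instance
  · rintro (a' | b') (a'' | b'') f f' g hr
    · exact hcomp a' a'' f.down f'.down g.down hr
    · exact (hom_inl_inr_false A B g).elim
    · exact (hom_inl_inr_false A B f).elim
    · exact (hom_inl_inr_false A B f).elim

lemma HasAdmissibleOrder.inr {b : B} (h : HasAdmissibleOrder b) :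
    HasAdmissibleOrder (Sum.inr b : A ⊕ B) := by
  obtain ⟨r, hwo, hcomp⟩ := h
  refine ⟨fun | .inl _ => fun _ _ => False | .inr b' => fun f f' => r b' f.down f'.down, ?_, ?_⟩
  · rintro (a' | b')
    · have : IsEmpty (Sum.inr b ⟶ (Sum.inl a' : A ⊕ B)) := ⟨hom_inr_inl_false B A⟩
      infer_instance
    · have := hwo b'
      exact ULift.down_injective.isWellOrder (r b')
  · rintro (a' | b') (a'' | b'') f f' g hr
    · exact (hom_inr_inl_false B A f).elim
    · exact (hom_inr_inl_false B A f).elim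
    · exact (hom_inr_inl_false B A g).elim
    · exact hcomp b' b'' f.down f'.down g.down hr

lemma Sum.exists_eq_inl_of_hom {a : A} (p : Σ y : A ⊕ B, (Sum.inl a ⟶ y)) :
    ∃ (a' : A) (g : a ⟶ a'), p = ⟨Sum.inl a', (Sum.inl_ A B).map g⟩ := by
  obtain ⟨a' | b', f⟩ := p
  · exact ⟨a', f.down, rfl⟩
  · exact (hom_inl_inr_false A B f).elim

lemma Sum.exists_eq_inr_of_hom {b : B} (p : Σ y : A ⊕ B, (Sum.inr b ⟶ y)) :
    ∃ (b' : B) (g : b ⟶ b'), p = ⟨Sum.inr b', (Sum.inr_ A B).map g⟩ := by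
  obtain ⟨a' | b', f⟩ := p
  · exact (hom_inr_inl_false B A f).elim
  · exact ⟨b', f.down, rfl⟩

lemma PropertyG2.sum (hA : PropertyG2 A) (hB : PropertyG2 B) : PropertyG2 (A ⊕ B) := by
  rintro (a | b) x
  · choose a' g hx using fun n => Sum.exists_eq_inl_of_hom (x n)
    obtain ⟨i, j, hij, k, e⟩ := hA a fun n => ⟨a' n, g n⟩
    refine ⟨i, j, hij, ?_⟩
    rw [hx i, hx j]
    exact ⟨(Sum.inl_ A B).map k, congrArg ULift.up e⟩
  · choose b' g hx using fun n => Sum.exists_eq_inr_of_hom (x n)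
    obtain ⟨i, j, hij, k, e⟩ := hB b fun n => ⟨b' n, g n⟩
    refine ⟨i, j, hij, ?_⟩
    rw [hx i, hx j]
    exact ⟨(Sum.inr_ A B).map k, congrArg ULift.up e⟩

lemma Grobner.sum (hA : Grobner A) (hB : Grobner B) : Grobner (A ⊕ B) :=
  ⟨fun | .inl a => (hA.1 a).inl | .inr b => (hB.1 b).inr, hA.2.sum hB.2⟩

end Sum

lemma quasiGrobner_of_sum' {A B : Type w₂} [Category.{w₁} A] [Category.{w₁} B]
    {E : Type*} [Category E] {L : A ⥤ E} {R : B ⥤ E} (hA : Grobner A) (hB : Grobner B)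
    (hL : PropertyF L) (hR : PropertyF R)
    (hLR : ∀ e : E, (∃ a, Nonempty (L.obj a ≅ e)) ∨ ∃ b, Nonempty (R.obj b ≅ e)) :
    QuasiGrobner.{w₁, w₂} E := by
  refine ⟨Cat.of (A ⊕ B), L.sum' R, ⟨fun e => ?_⟩, hL.sum' hR, hA.sum hB⟩
  rcases hLR e with ⟨a, h⟩ | ⟨b, h⟩
  exacts [⟨.inl a, h⟩, ⟨.inr b, h⟩]

lemma ObjectProperty.essSurj_lift_inverseImage {A D : Type*} [Category A] [Category D]
    (Φ : A ⥤ D) (Z : ObjectProperty D) [Z.IsClosedUnderIsomorphisms]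
    (h : ∀ d, Z d → ∃ a, Nonempty (Φ.obj a ≅ d)) :
    (Z.lift ((Z.inverseImage Φ).ι ⋙ Φ) fun a => a.property).EssSurj := by
  refine ⟨fun d => ?_⟩
  obtain ⟨a, ⟨e⟩⟩ := h d.obj d.property
  exact ⟨⟨a, Z.prop_of_iso e.symm d.property⟩, ⟨Z.isoMk e⟩⟩

instance ObjectProperty.essSurj_ιOfLE_isoClosure {D : Type*} [Category D]
    (Z : ObjectProperty D) : (ObjectProperty.ιOfLE Z.le_isoClosure).EssSurj :=
  ⟨fun ⟨_, d, hd, ⟨e⟩⟩ => ⟨⟨d, hd⟩, ⟨ObjectProperty.isoMk _ e.symm⟩⟩⟩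

/-- Suppose the category `C` is the disjoint union of the two full subcategories `C₀` (on
objects satisfying `P`) and `C'` (on objects not satisfying `P`), with no morphisms between
them, and suppose there is a full functor, surjective on objects, from a full subcategory
`C₁` of `C'` (on objects satisfying `Q`) to `C₀`. If `C'` is quasi-Gröbner, then `C` is
quasi-Gröbner. -/
theorem quasiGrobner_of_disjoint_union {C : Type*} [Category C] (P Q : C → Prop)
    (hdisj : ∀ (c c' : C), (c ⟶ c') → (P c ↔ P c'))
    (hQ : ∀ c : C, Q c → ¬ P c)
    (F : ObjectProperty.FullSubcategory Q ⥤ ObjectProperty.FullSubcategory P)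
    (hfull : F.Full) (hsurj : Function.Surjective F.obj)
    (hC' : QuasiGrobner.{w₁, w₂} (ObjectProperty.FullSubcategory (fun c : C => ¬ P c))) :
    QuasiGrobner.{w₁, w₂} C := by
  obtain ⟨A, Φ, hΦ, hF, hG⟩ := hC'
  have hP : ∀ ⦃c c' : C⦄, (c ⟶ c') → P c' → P c := fun c c' f => (hdisj c c' f).2
  have hnP : ∀ ⦃c c' : C⦄, (c ⟶ c') → ¬P c' → ¬P c := fun c c' f => mt (hdisj c c' f).1
  let Φ' := Φ ⋙ ObjectProperty.ι _
  have hΦ' : ∀ c, ¬P c → ∃ a, Nonempty (Φ'.obj a ≅ c) := fun c hc =>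
    ⟨Φ.objPreimage ⟨c, hc⟩, ⟨(ObjectProperty.ι _).mapIso (Φ.objObjPreimageIso _)⟩⟩
  let Q' := ObjectProperty.isoClosure Q
  let Res := Q'.lift ((Q'.inverseImage Φ').ι ⋙ Φ') fun a => a.property
  have : Res.EssSurj := ObjectProperty.essSurj_lift_inverseImage Φ' Q'
    fun c ⟨c₀, hc₀, ⟨e⟩⟩ => hΦ' c (hnP e.hom (hQ c₀ hc₀))
  have := Functor.essSurj_of_surj hsurj
  let G := Res ⋙ (ObjectProperty.ιOfLE (ObjectProperty.le_isoClosure Q)).inv ⋙ F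
  have hG' : PropertyF (G ⋙ ObjectProperty.ι P) :=
    (((hF.comp_ι hnP).lift_inverseImage hG.2 Q').comp (.of_full_of_essSurj (_ ⋙ F))).comp_ι hP
  refine quasiGrobner_of_sum' hG (hG.fullSubcategory _) (hF.comp_ι hnP) hG' fun c => ?_
  by_cases hc : P c
  · exact .inr ⟨G.objPreimage ⟨c, hc⟩, ⟨(ObjectProperty.ι P).mapIso (G.objObjPreimageIso _)⟩⟩
  · exact .inl (hΦ' c hc)
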